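/- For every positive integer n and t ≠ 0, the n-th derivative of e^{1/t} is (-1)^n (e^{1/t}/t^{2n}) Σ_{k=0}^{n-1} L(n, n-k) t^k, where L(n,k) = C(n-1,k-1) n!/k! are the Lah numbers. -/

import Mathlib

open Nat

/-- The (unsigned) Lah numbers `L(n,k) = C(n-1,k-1) · n!/k!`. -/
noncomputable def lahNumber (n k : ℕ) : ℝ := ((n - 1).choose (k - 1)) * (n ! : ℝ) / k !

/-! Writing `u = t⁻¹`, one has `d/dt (e^u u^m) = -e^u (u^(m+2) + m u^(m+1))`, so by induction
`(d/dt)^n e^(1/t) = (-1)^n e^(1/t) ∑_{k=1}^n L(n,k) t^-(n+k)`: collecting the powers of `u` after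
differentiating is exactly the Lah recurrence `L(n+1,k) = L(n,k-1) + (n+k) L(n,k)`.
The stated form is this sum reindexed by `k ↦ n - k`, with `t^-(2n)` factored out. -/

open Finset Real Topology

lemma lahNumber_one (n : ℕ) : lahNumber n 1 = n ! := by
  simp [lahNumber]

lemma lahNumber_eq_zero_of_lt {n k : ℕ} (hn : n ≠ 0) (hnk : n < k) : lahNumber n k = 0 := by
  simp [lahNumber, Nat.choose_eq_zero_of_lt (show n - 1 < k - 1 by omega)]

-- Only for second arguments `≥ 2`: since `0 - 1 = 0` in `ℕ`, `lahNumber n 0` is `n !`, not `0`.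
lemma lahNumber_succ_succ (n k : ℕ) :
    lahNumber (n + 2) (k + 2)
      = lahNumber (n + 1) (k + 1) + (n + k + 3) * lahNumber (n + 1) (k + 2) := by
  have pascal : ((n + 1).choose (k + 1) : ℝ) = n.choose k + n.choose (k + 1) := by
    exact_mod_cast Nat.choose_succ_succ' n k
  have absorb : ((n + 1 : ℕ) : ℝ) * n.choose k = (n + 1).choose (k + 1) * (k + 1) := by
    exact_mod_cast Nat.add_one_mul_choose_eq n k
  simp only [lahNumber, Nat.add_sub_cancel, show n + 2 - 1 = n + 1 by omega, Nat.factorial_succ]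
  push_cast at absorb ⊢
  field_simp
  rw [pascal] at absorb ⊢
  linear_combination absorb

lemma sum_lahNumber_mul_pow_succ (n : ℕ) (hn : n ≠ 0) (u : ℝ) :
    ∑ j ∈ range n, lahNumber n (j + 1)
        * (u ^ (n + j + 1 + 2) + ((n + j + 1 : ℕ) : ℝ) * u ^ (n + j + 1 + 1))
      = ∑ j ∈ range (n + 1), lahNumber (n + 1) (j + 1) * u ^ (n + 1 + j + 1) := by
  obtain ⟨m, rfl⟩ : ∃ m, n = m + 1 := ⟨n - 1, by omega⟩
  have hshift :
      ∑ j ∈ range (m + 1), (m + j + 2 : ℝ) * lahNumber (m + 1) (j + 1) * u ^ (m + j + 3)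
        = ∑ j ∈ range (m + 1), (m + j + 3 : ℝ) * lahNumber (m + 1) (j + 2) * u ^ (m + j + 4)
          + (m + 2) * lahNumber (m + 1) 1 * u ^ (m + 3) := by
    calc _ = ∑ j ∈ range (m + 2),
          (m + j + 2 : ℝ) * lahNumber (m + 1) (j + 1) * u ^ (m + j + 3) := by
          rw [sum_range_succ _ (m + 1),
            lahNumber_eq_zero_of_lt (k := m + 1 + 1) (by omega) (by omega),
            mul_zero, zero_mul, add_zero]
      _ = _ := by
          rw [sum_range_succ']
          push_cast
          congr 1
          · exact sum_congr rfl fun j _ => by ring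
          · ring
  calc _ = ∑ j ∈ range (m + 1), lahNumber (m + 1) (j + 1) * u ^ (m + j + 4)
          + ∑ j ∈ range (m + 1),
              (m + j + 2 : ℝ) * lahNumber (m + 1) (j + 1) * u ^ (m + j + 3) := by
        rw [← sum_add_distrib]
        exact sum_congr rfl fun j _ => by push_cast; ring
    _ = ∑ j ∈ range (m + 1), lahNumber (m + 1) (j + 1) * u ^ (m + j + 4)
          + ∑ j ∈ range (m + 1),
              (m + j + 3 : ℝ) * lahNumber (m + 1) (j + 2) * u ^ (m + j + 4)
          + (m + 2) * lahNumber (m + 1) 1 * u ^ (m + 3) := by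
        rw [hshift, add_assoc]
    _ = _ := by
        rw [sum_range_succ' _ (m + 1), lahNumber_one, lahNumber_one, ← sum_add_distrib]
        congr 1
        · exact sum_congr rfl fun j _ => by rw [lahNumber_succ_succ]; ring
        · push_cast [Nat.factorial_succ]; ring

lemma hasDerivAt_exp_inv_mul_inv_pow (m : ℕ) {t : ℝ} (ht : t ≠ 0) :
    HasDerivAt (fun s => exp s⁻¹ * s⁻¹ ^ m)
      (-(exp t⁻¹ * (t⁻¹ ^ (m + 2) + m * t⁻¹ ^ (m + 1)))) t := by
  have hinv : HasDerivAt (·⁻¹) (-(t ^ 2)⁻¹) t := hasDerivAt_inv ht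
  refine (hinv.exp.mul (hinv.fun_pow m)).congr_deriv ?_
  rcases m with _ | m
  · simp
  · push_cast; ring

lemma hasDerivAt_exp_inv_mul_sum_lahNumber (n : ℕ) (hn : n ≠ 0) {t : ℝ} (ht : t ≠ 0) :
    HasDerivAt (fun s => exp s⁻¹ * ∑ j ∈ range n, lahNumber n (j + 1) * s⁻¹ ^ (n + j + 1))
      (-(exp t⁻¹ * ∑ j ∈ range (n + 1), lahNumber (n + 1) (j + 1) * t⁻¹ ^ (n + 1 + j + 1)))
      t := by
  have hsum := HasDerivAt.fun_sum (u := range n) fun j _ =>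
    (hasDerivAt_exp_inv_mul_inv_pow (n + j + 1) ht).const_mul (lahNumber n (j + 1))
  have hfun : (fun s => exp s⁻¹ * ∑ j ∈ range n, lahNumber n (j + 1) * s⁻¹ ^ (n + j + 1))
      = fun s => ∑ j ∈ range n, lahNumber n (j + 1) * (exp s⁻¹ * s⁻¹ ^ (n + j + 1)) := by
    ext s
    rw [mul_sum]
    exact sum_congr rfl fun j _ => mul_left_comm _ _ _
  rw [hfun]
  refine hsum.congr_deriv ?_
  rw [← sum_lahNumber_mul_pow_succ n hn, mul_sum, ← sum_neg_distrib]
  exact sum_congr rfl fun j _ => by ring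

theorem iteratedDeriv_exp_inv_eq_sum {n : ℕ} (hn : 1 ≤ n) {t : ℝ} (ht : t ≠ 0) :
    iteratedDeriv n (fun s => exp s⁻¹) t
      = (-1) ^ n * (exp t⁻¹ * ∑ j ∈ range n, lahNumber n (j + 1) * t⁻¹ ^ (n + j + 1)) := by
  induction n, hn using Nat.le_induction generalizing t with
  | base =>
    rw [iteratedDeriv_one]
    simpa [lahNumber_one] using (hasDerivAt_exp_inv_mul_inv_pow 0 ht).deriv
  | succ n hn ih =>
    have heq : iteratedDeriv n (fun s => exp s⁻¹) =ᶠ[𝓝 t]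
        fun s => (-1) ^ n * (exp s⁻¹ * ∑ j ∈ range n,
          lahNumber n (j + 1) * s⁻¹ ^ (n + j + 1)) :=
      (eventually_ne_nhds ht).mono fun s hs => ih hs
    rw [iteratedDeriv_succ, heq.deriv_eq,
      ((hasDerivAt_exp_inv_mul_sum_lahNumber n (by omega) ht).const_mul _).deriv]
    ring

lemma inv_pow_mul_sum_lahNumber_eq_sum_inv_pow (n : ℕ) (t : ℝ) :
    (t ^ (2 * n))⁻¹ * ∑ k ∈ range n, lahNumber n (n - k) * t ^ k
      = ∑ j ∈ range n, lahNumber n (j + 1) * t⁻¹ ^ (n + j + 1) := by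
  rw [← sum_range_reflect, mul_sum]
  refine sum_congr rfl fun j hj => ?_
  have hj : j < n := mem_range.mp hj
  rw [show n - (n - 1 - j) = j + 1 by omega, mul_left_comm, inv_pow]
  by_cases ht : t = 0
  · simp [ht, show n ≠ 0 by omega]
  · congr 1
    field_simp
    rw [← pow_add]; congr 1; omega

theorem iteratedDeriv_exp_inv (n : ℕ) (hn : 1 ≤ n) (t : ℝ) (ht : t ≠ 0) :
    iteratedDeriv n (fun s : ℝ => Real.exp (1 / s)) t
      = (-1) ^ n * (Real.exp (1 / t) / t ^ (2 * n))
          * ∑ k ∈ Finset.range n, lahNumber n (n - k) * t ^ k := by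
  simp only [one_div]
  rw [iteratedDeriv_exp_inv_eq_sum hn ht, ← inv_pow_mul_sum_lahNumber_eq_sum_inv_pow,
    div_eq_mul_inv]
  ring
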